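/- Let L be a proper length function on G and let F^p_r(G) denote the closure in the Banach algebra of bounded operators on ℓ^p(G) of the set {λ_p(a) : a ∈ ℓ¹(G)}. Then the set of all T ∈ F^p_r(G) for which there exists C ≥ 0 such that for every finitely supported ξ : G → ℂ the function g ↦ L(g)·(Tξ)(g) − (T(L·ξ))(g) belongs to ℓ^p(G) with norm at most C‖ξ‖_p, is a subalgebra of F^p_r(G) that is dense in F^p_r(G); indeed it contains λ_p(a) for every finitely supported a : G → ℂ. -/

import Mathlib

noncomputable section
open scoped ENNReal Topology
open Function Filter

/-- Convolution: `(a * ξ)(g) = ∑_{k ∈ G} a(k) ξ(k⁻¹ g)`.  For `a ∈ ℓ¹(G)` this is the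
left regular representation `λ_p(a)` applied to `ξ`. -/
def conv {G : Type*} [Group G] (a ξ : G → ℂ) : G → ℂ :=
  fun g => ∑' k : G, a k * ξ (k⁻¹ * g)

/-- A length function on a group `G`. -/
def IsLengthFunction {G : Type*} [Group G] (L : G → ℝ) : Prop :=
  (∀ g, 0 ≤ L g) ∧ (∀ g, L g = 0 ↔ g = 1) ∧
    (∀ g h, L (g * h) ≤ L g + L h) ∧ (∀ g, L g⁻¹ = L g)

/-- A proper length function on a group `G`: a length function all of whose sublevel sets
are finite. -/
def IsProperLengthFunction {G : Type*} [Group G] (L : G → ℝ) : Prop :=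
  IsLengthFunction L ∧ ∀ R : ℝ, (L ⁻¹' Set.Icc 0 R).Finite

/-- The reduced group `L^p`-operator algebra `F^p_r(G)`, realized as a subset of the
bounded operators on `ℓ^p(G)`: the operator-norm closure of `λ_p(ℓ¹(G))`. -/
def Frp (p : ℝ≥0∞) [Fact (1 ≤ p)] (G : Type*) [Group G] :
    Set (lp (fun _ : G => ℂ) p →L[ℂ] lp (fun _ : G => ℂ) p) :=
  closure {T | ∃ a : G → ℂ, Memℓp a 1 ∧
    ∀ ξ : lp (fun _ : G => ℂ) p, ⇑(T ξ) = conv a ⇑ξ}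

/-!
For `a ∈ ℓ¹(G)` the series `∑ₖ a(k) λ_p(k)` converges absolutely in operator norm to `λ_p(a)`, so
`F^p_r(G)` is the closure of the subalgebra `λ_p(ℂ[G])`. The operators `T` whose commutator with
the unbounded multiplication operator `M_L` is bounded form a subalgebra, by the Leibniz rule
`[M_L, ST] = [M_L, S] T + S [M_L, T]`; for `p < ∞` a bound on finitely supported vectors extends to
the whole domain of `M_L` by truncation. Each translation `λ_p(k)` lies in this subalgebra, since
`[M_L, λ_p(k)]` is multiplication by `g ↦ L(g) - L(k⁻¹g)`, which is bounded by `L(k)`. So the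
operators in question form the intersection of two subalgebras, both containing `λ_p(ℂ[G])`.
-/

namespace Memℓp

variable {α β E : Type*} [NormedAddCommGroup E] {p : ℝ≥0∞}

theorem comp_equiv {f : β → E} (hf : Memℓp f p) (e : α ≃ β) : Memℓp (f ∘ e) p := by
  obtain rfl | rfl | hp := p.trichotomy
  · exact memℓp_zero_iff.2 (hf.finite_dsupport.preimage e.injective.injOn)
  · refine memℓp_infty_iff.2 ?_
    exact (e.surjective.range_comp fun i => ‖f i‖).symm ▸ hf.bddAbove
  · exact (memℓp_gen_iff hp).2 (e.summable_iff.2 (hf.summable hp))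

end Memℓp

namespace lp

variable {α β E : Type*} [NormedAddCommGroup E] {p : ℝ≥0∞}

theorem coeFn_sum_single [DecidableEq α] (f : α → E) (s : Finset α) :
    ⇑(∑ i ∈ s, lp.single p i (f i) : lp (fun _ : α => E) p) = (s : Set α).indicator f := by
  ext g
  rw [lp.coeFn_sum, Finset.sum_apply]
  simp [lp.single_apply, Set.indicator_apply]

variable [Fact (1 ≤ p)]

theorem norm_comp_equiv (f : lp (fun _ : β => E) p) (e : α ≃ β) :
    ‖(⟨f ∘ e, (lp.memℓp f).comp_equiv e⟩ : lp (fun _ : α => E) p)‖ = ‖f‖ := by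
  obtain rfl | rfl | hp := p.trichotomy
  · exact absurd (Fact.out : (1 : ℝ≥0∞) ≤ 0) (by norm_num)
  · simp only [lp.norm_eq_ciSup]
    exact e.iSup_comp (g := fun i => ‖f i‖)
  · simp only [lp.norm_eq_tsum_rpow hp]
    exact congrArg (· ^ (1 / p.toReal)) (e.tsum_eq fun i => ‖f i‖ ^ p.toReal)

variable (𝕜 : Type*) [NormedField 𝕜] [NormedSpace 𝕜 E]

def compEquiv (e : α ≃ β) : lp (fun _ : β => E) p →ₗᵢ[𝕜] lp (fun _ : α => E) p where
  toFun f := ⟨f ∘ e, (lp.memℓp f).comp_equiv e⟩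
  map_add' _ _ := rfl
  map_smul' _ _ := rfl
  norm_map' f := norm_comp_equiv f e

@[simp]
theorem compEquiv_apply (e : α ≃ β) (f : lp (fun _ : β => E) p) (i : α) :
    compEquiv 𝕜 e f i = f (e i) := rfl

end lp

section LeftRegular

variable (p : ℝ≥0∞) [Fact (1 ≤ p)] (G : Type*) [Group G]

/-- The left regular representation `λ_p` of `G` on `ℓ^p(G)`: `(λ_p(k) ξ)(g) = ξ(k⁻¹ g)`. -/
def leftRegular : G →* (lp (fun _ : G => ℂ) p →L[ℂ] lp (fun _ : G => ℂ) p) where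
  toFun k := (lp.compEquiv ℂ (Equiv.mulLeft k⁻¹)).toContinuousLinearMap
  map_one' := by ext; simp
  map_mul' k k' := by ext; simp

def leftRegularAlgHom :
    MonoidAlgebra ℂ G →ₐ[ℂ] (lp (fun _ : G => ℂ) p →L[ℂ] lp (fun _ : G => ℂ) p) :=
  MonoidAlgebra.lift ℂ _ G (leftRegular p G)

variable {p G}

@[simp]
theorem leftRegular_apply_apply (k : G) (ξ : lp (fun _ : G => ℂ) p) (g : G) :
    leftRegular p G k ξ g = ξ (k⁻¹ * g) := rfl

theorem norm_leftRegular_apply (k : G) (ξ : lp (fun _ : G => ℂ) p) :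
    ‖leftRegular p G k ξ‖ = ‖ξ‖ :=
  lp.norm_comp_equiv ξ _

theorem norm_leftRegular_le (k : G) : ‖leftRegular p G k‖ ≤ 1 :=
  LinearIsometry.norm_toContinuousLinearMap_le _

theorem coe_leftRegularAlgHom_apply (x : MonoidAlgebra ℂ G) (ξ : lp (fun _ : G => ℂ) p) :
    ⇑(leftRegularAlgHom p G x ξ) = conv ⇑x.coeff ⇑ξ := by
  ext g
  rw [leftRegularAlgHom, MonoidAlgebra.lift_apply, conv, tsum_eq_sum (s := x.coeff.support)
    fun k hk => by rw [Finsupp.notMem_support_iff.1 hk, zero_mul]]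
  simp only [Finsupp.sum, FunLike.coe_sum, Finset.sum_apply,
    FunLike.coe_smul, Pi.smul_apply]
  rw [lp.coeFn_sum, Finset.sum_apply]
  simp

theorem hasSum_smul_leftRegular {a : G → ℂ} (ha : Memℓp a 1)
    {T : lp (fun _ : G => ℂ) p →L[ℂ] lp (fun _ : G => ℂ) p}
    (hT : ∀ ξ, ⇑(T ξ) = conv a ⇑ξ) :
    HasSum (fun k => a k • leftRegular p G k) T := by
  obtain ⟨S, hS⟩ : Summable fun k => a k • leftRegular p G k :=
    .of_norm_bounded (ha.summable_of_one.norm) fun k =>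
      (norm_smul_le _ _).trans (mul_le_of_le_one_right (norm_nonneg _) (norm_leftRegular_le k))
  convert hS
  ext ξ g
  rw [hT, conv]
  exact ((hS.mapL (.apply ℂ _ ξ)).mapL (lp.evalCLM ℂ _ p g)).tsum_eq

theorem Frp_eq_topologicalClosure_range :
    Frp p G = (leftRegularAlgHom p G).range.topologicalClosure := by
  refine subset_antisymm (closure_minimal ?_ isClosed_closure) (closure_mono ?_)
  · rintro T ⟨a, ha, hT⟩
    refine mem_closure_of_tendsto (hasSum_smul_leftRegular ha hT) (.of_forall fun s => ?_)
    refine Subalgebra.sum_mem _ fun k _ => Subalgebra.smul_mem _ ?_ _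
    exact ⟨.of ℂ G k, MonoidAlgebra.lift_of _ k⟩
  · rintro _ ⟨x, rfl⟩
    refine ⟨⇑x.coeff, (memℓp_zero x.coeff.hasFiniteSupport).of_exponent_ge zero_le,
      coe_leftRegularAlgHom_apply x⟩

end LeftRegular

section Commutator

variable {α : Type*} {p : ℝ≥0∞} [Fact (1 ≤ p)]

/-- On the domain of the unbounded multiplication operator `M_w`, the commutator
`[M_w, T] = M_w T - T M_w` takes values in `ℓ^p` and has norm at most `C`
(here `η = M_w ξ` and `ζ = [M_w, T] ξ`). -/
def CommutatorBoundedBy (w : α → ℂ) (T : lp (fun _ : α => ℂ) p →L[ℂ] lp (fun _ : α => ℂ) p)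
    (C : ℝ) : Prop :=
  ∀ ξ η : lp (fun _ : α => ℂ) p, ⇑η = w * ⇑ξ →
    ∃ ζ : lp (fun _ : α => ℂ) p, ⇑ζ = w * ⇑(T ξ) - ⇑(T η) ∧ ‖ζ‖ ≤ C * ‖ξ‖

namespace CommutatorBoundedBy

variable {w : α → ℂ} {S T : lp (fun _ : α => ℂ) p →L[ℂ] lp (fun _ : α => ℂ) p} {C D : ℝ}

theorem zero : CommutatorBoundedBy w (0 : lp (fun _ : α => ℂ) p →L[ℂ] _) 0 :=
  fun _ _ _ => ⟨0, by simp only [zero_apply, lp.coeFn_zero, mul_zero, sub_zero], by simp⟩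

theorem one : CommutatorBoundedBy w (1 : lp (fun _ : α => ℂ) p →L[ℂ] _) 0 :=
  fun _ _ hη => ⟨0, by ext; simp [hη], by simp⟩

theorem smul (hT : CommutatorBoundedBy w T C) (c : ℂ) :
    CommutatorBoundedBy w (c • T) (‖c‖ * C) := by
  intro ξ η hη
  obtain ⟨ζ, hζ, hC⟩ := hT ξ η hη
  refine ⟨c • ζ, ?_, ?_⟩
  · simp only [lp.coeFn_smul, hζ, smul_apply, smul_sub, mul_smul_comm]
  · rw [norm_smul, mul_assoc]
    gcongr

theorem add (hS : CommutatorBoundedBy w S C) (hT : CommutatorBoundedBy w T D) :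
    CommutatorBoundedBy w (S + T) (C + D) := by
  intro ξ η hη
  obtain ⟨ζS, hζS, hC⟩ := hS ξ η hη
  obtain ⟨ζT, hζT, hD⟩ := hT ξ η hη
  refine ⟨ζS + ζT, ?_, ?_⟩
  · simp only [lp.coeFn_add, hζS, hζT, add_apply, mul_add]
    abel
  · rw [add_mul]
    exact (norm_add_le _ _).trans (add_le_add hC hD)

theorem mul (hS : CommutatorBoundedBy w S C) (hC : 0 ≤ C) (hT : CommutatorBoundedBy w T D) :
    CommutatorBoundedBy w (S * T) (C * ‖T‖ + ‖S‖ * D) := by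
  intro ξ η hη
  obtain ⟨ζT, hζT, hD⟩ := hT ξ η hη
  -- `Tξ` lies in the domain of `M_w`, as `M_w Tξ = [M_w, T] ξ + T M_w ξ`
  obtain ⟨ζS, hζS, hC'⟩ := hS (T ξ) (ζT + T η) (by rw [lp.coeFn_add, hζT, sub_add_cancel])
  refine ⟨ζS + S ζT, ?_, ?_⟩
  · have hSζT : S ζT = S (ζT + T η) - S (T η) := by simp
    rw [hSζT]
    simp only [lp.coeFn_add, lp.coeFn_sub, hζS, mul_apply_eq_comp]
    abel
  · calc ‖ζS + S ζT‖ ≤ C * (‖T‖ * ‖ξ‖) + ‖S‖ * (D * ‖ξ‖) :=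
          (norm_add_le _ _).trans (add_le_add
            (hC'.trans (mul_le_mul_of_nonneg_left (T.le_opNorm ξ) hC))
            ((S.le_opNorm ζT).trans (mul_le_mul_of_nonneg_left hD (norm_nonneg S))))
      _ = (C * ‖T‖ + ‖S‖ * D) * ‖ξ‖ := by ring

end CommutatorBoundedBy

variable (p) in
def commutatorBoundedSubalgebra (w : α → ℂ) :
    Subalgebra ℂ (lp (fun _ : α => ℂ) p →L[ℂ] lp (fun _ : α => ℂ) p) where
  carrier := {T | ∃ C, 0 ≤ C ∧ CommutatorBoundedBy w T C}
  zero_mem' := ⟨0, le_rfl, .zero⟩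
  one_mem' := ⟨0, le_rfl, .one⟩
  add_mem' := fun ⟨C, hC, hS⟩ ⟨D, hD, hT⟩ => ⟨C + D, add_nonneg hC hD, hS.add hT⟩
  mul_mem' := fun {S T} ⟨C, hC, hS⟩ ⟨D, hD, hT⟩ =>
    ⟨C * ‖T‖ + ‖S‖ * D, by positivity, hS.mul hC hT⟩
  algebraMap_mem' c := by
    rw [Algebra.algebraMap_eq_smul_one]
    exact ⟨‖c‖ * 0, by simp, CommutatorBoundedBy.one.smul c⟩

theorem commutatorBoundedBy_of_finite_support (hp : p ≠ ∞) {w : α → ℂ}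
    {T : lp (fun _ : α => ℂ) p →L[ℂ] lp (fun _ : α => ℂ) p} {C : ℝ} (hC : 0 ≤ C)
    (h : ∀ ξ η : lp (fun _ : α => ℂ) p, (Function.support ⇑ξ).Finite → ⇑η = w * ⇑ξ →
      ∃ ζ : lp (fun _ : α => ℂ) p, ⇑ζ = w * ⇑(T ξ) - ⇑(T η) ∧ ‖ζ‖ ≤ C * ‖ξ‖) :
    CommutatorBoundedBy w T C := by
  classical
  intro ξ η hη
  set trunc : lp (fun _ : α => ℂ) p → Finset α → lp (fun _ : α => ℂ) p :=
    fun f s => ∑ i ∈ s, lp.single p i (f i)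
  have coe_trunc (f : lp (fun _ : α => ℂ) p) s : ⇑(trunc f s) = (s : Set α).indicator f :=
    lp.coeFn_sum_single _ s
  have approx (s : Finset α) : ∃ ζ : lp (fun _ : α => ℂ) p,
      ⇑ζ = w * ⇑(T (trunc ξ s)) - ⇑(T (trunc η s)) ∧ ‖ζ‖ ≤ C * ‖ξ‖ := by
    obtain ⟨ζ, hζ, hb⟩ := h (trunc ξ s) (trunc η s)
      (s.finite_toSet.subset (by rw [coe_trunc]; exact Set.support_indicator_subset))
      (funext fun i => by
        simp only [coe_trunc, hη]
        exact Set.indicator_mul_right _ _ _)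
    refine ⟨ζ, hζ, hb.trans (mul_le_mul_of_nonneg_left (lp.norm_mono ?_ fun i => ?_) hC)⟩
    · exact (zero_lt_one.trans_le Fact.out).ne'
    · rw [coe_trunc]
      exact norm_indicator_le_norm_self _ i
  choose ζ hζ hb using approx
  have hlim (f : lp (fun _ : α => ℂ) p) :
      Tendsto (fun s => ⇑(T (trunc f s))) atTop (𝓝 ⇑(T f)) :=
    (lp.uniformContinuous_coe.continuous.tendsto _).comp
      ((T.continuous.tendsto f).comp (lp.hasSum_single hp f))
  have hζlim : Tendsto (fun s => ⇑(ζ s)) atTop (𝓝 (w * ⇑(T ξ) - ⇑(T η))) := by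
    simpa only [hζ] using ((hlim ξ).const_mul w).sub (hlim η)
  have hbdd : Bornology.IsBounded (Set.range ζ) :=
    isBounded_iff_forall_norm_le.2 ⟨_, Set.forall_mem_range.2 hb⟩
  exact ⟨⟨_, lp.memℓp_of_tendsto hbdd hζlim⟩, rfl,
    lp.norm_le_of_tendsto (.of_forall hb) hζlim⟩

theorem commutatorBoundedBy_iff_forall_finite_support (hp : p ≠ ∞) {w : α → ℂ}
    {T : lp (fun _ : α => ℂ) p →L[ℂ] lp (fun _ : α => ℂ) p} {C : ℝ} (hC : 0 ≤ C) :
    CommutatorBoundedBy w T C ↔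
      ∀ ξ : lp (fun _ : α => ℂ) p, (Function.support ⇑ξ).Finite →
        ∀ hwξ : Memℓp (w * ⇑ξ) p, ∃ hc : Memℓp (w * ⇑(T ξ) - ⇑(T ⟨_, hwξ⟩)) p,
          ‖(⟨_, hc⟩ : lp (fun _ : α => ℂ) p)‖ ≤ C * ‖ξ‖ := by
  refine ⟨fun h ξ _ hwξ => ?_, fun h => commutatorBoundedBy_of_finite_support hp hC ?_⟩
  · obtain ⟨ζ, hζ, hb⟩ := h ξ ⟨_, hwξ⟩ rfl
    exact ⟨hζ ▸ ζ.2, (congrArg norm (Subtype.ext hζ.symm)).trans_le hb⟩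
  · rintro ξ ⟨_, hwξ⟩ hfin (rfl : _ = w * ⇑ξ)
    obtain ⟨hc, hb⟩ := h ξ hfin hwξ
    exact ⟨_, rfl, hb⟩

end Commutator

section LengthFunction

variable {p : ℝ≥0∞} [Fact (1 ≤ p)] {G : Type*} [Group G]

theorem commutatorBoundedBy_leftRegular {w : G → ℂ} {k : G} {c : ℝ}
    (hw : ∀ g, ‖w g - w (k⁻¹ * g)‖ ≤ c) : CommutatorBoundedBy w (leftRegular p G k) c := by
  intro ξ η hη
  have hc : 0 ≤ c := (norm_nonneg _).trans (hw 1)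
  set v := (c : ℂ) • leftRegular p G k ξ
  have hζv (g : G) : ‖(w g - w (k⁻¹ * g)) * ξ (k⁻¹ * g)‖ ≤ ‖v g‖ := by
    rw [norm_mul, lp.coeFn_smul, Pi.smul_apply, norm_smul, Complex.norm_real,
      Real.norm_of_nonneg hc, leftRegular_apply_apply]
    exact mul_le_mul_of_nonneg_right (hw g) (norm_nonneg _)
  refine ⟨⟨_, (lp.memℓp v).mono' hζv⟩, funext fun g => ?_, ?_⟩
  · simp only [Pi.sub_apply, Pi.mul_apply, leftRegular_apply_apply, hη]
    ring
  · calc _ ≤ ‖v‖ := lp.norm_mono (zero_lt_one.trans_le Fact.out).ne' hζv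
      _ ≤ c * ‖ξ‖ := by
        rw [norm_smul, Complex.norm_real, Real.norm_of_nonneg hc, norm_leftRegular_apply]

theorem IsLengthFunction.abs_sub_le {L : G → ℝ} (hL : IsLengthFunction L) (k g : G) :
    |L g - L (k⁻¹ * g)| ≤ L k := by
  obtain ⟨-, -, hmul, hinv⟩ := hL
  have h₁ := hmul k (k⁻¹ * g)
  have h₂ := hmul k⁻¹ g
  rw [mul_inv_cancel_left] at h₁
  rw [hinv] at h₂
  exact abs_sub_le_iff.2 ⟨by linarith, by linarith⟩

theorem range_leftRegularAlgHom_le {L : G → ℝ} (hL : IsLengthFunction L) :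
    (leftRegularAlgHom p G).range ≤ commutatorBoundedSubalgebra p (fun g => (L g : ℂ)) := by
  rintro _ ⟨x, rfl⟩
  change leftRegularAlgHom p G x ∈ _
  induction x using MonoidAlgebra.induction_on with
  | of k =>
    refine ⟨L k, hL.1 k, ?_⟩
    rw [leftRegularAlgHom, MonoidAlgebra.lift_of]
    refine commutatorBoundedBy_leftRegular fun g => ?_
    rw [← Complex.ofReal_sub, Complex.norm_real, Real.norm_eq_abs]
    exact hL.abs_sub_le k g
  | add x y hx hy => simpa only [map_add] using add_mem hx hy
  | smul c x hx => simpa only [map_smul] using Subalgebra.smul_mem _ hx c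

theorem mem_range_leftRegularAlgHom {a : G → ℂ} (ha : (Function.support a).Finite)
    {T : lp (fun _ : G => ℂ) p →L[ℂ] lp (fun _ : G => ℂ) p} (hT : ∀ ξ, ⇑(T ξ) = conv a ⇑ξ) :
    T ∈ (leftRegularAlgHom p G).range := by
  refine ⟨.ofCoeff (Finsupp.ofSupportFinite a ha), ?_⟩
  ext1 ξ
  exact lp.ext ((coe_leftRegularAlgHom_apply _ ξ).trans (hT ξ).symm)

end LengthFunction

theorem stmt4_general (p : ℝ≥0∞) [Fact (1 ≤ p)] (hp' : p ≠ ∞)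
    {G : Type*} [Group G]
    (L : G → ℝ) (hL : IsProperLengthFunction L)
    (Lip : Set (lp (fun _ : G => ℂ) p →L[ℂ] lp (fun _ : G => ℂ) p))
    (hLip : Lip = {T | T ∈ Frp p G ∧ ∃ C : ℝ, 0 ≤ C ∧
      ∀ ξ : lp (fun _ : G => ℂ) p, (Function.support ⇑ξ).Finite →
        ∀ hLξ : Memℓp (fun g => (L g : ℂ) * ξ g) p,
          ∃ hc : Memℓp (fun g => (L g : ℂ) * (T ξ) g - (T ⟨_, hLξ⟩) g) p,
            ‖(⟨_, hc⟩ : lp (fun _ : G => ℂ) p)‖ ≤ C * ‖ξ‖}) :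
    (∀ (cc : ℂ) (S T : lp (fun _ : G => ℂ) p →L[ℂ] lp (fun _ : G => ℂ) p),
      S ∈ Lip → T ∈ Lip → cc • S ∈ Lip ∧ S + T ∈ Lip ∧ S * T ∈ Lip) ∧
    Frp p G ⊆ closure Lip ∧
    (∀ a : G → ℂ, (Function.support a).Finite →
      ∀ T : lp (fun _ : G => ℂ) p →L[ℂ] lp (fun _ : G => ℂ) p,
        (∀ ξ : lp (fun _ : G => ℂ) p, ⇑(T ξ) = conv a ⇑ξ) → T ∈ Lip) := by
  set A := (leftRegularAlgHom p G).range
  set B := A.topologicalClosure ⊓ commutatorBoundedSubalgebra p (fun g => (L g : ℂ))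
  have hLipB : Lip = B := by
    ext T
    rw [hLip, Frp_eq_topologicalClosure_range]
    exact and_congr_right' (exists_congr fun C => and_congr_right fun hC =>
      (commutatorBoundedBy_iff_forall_finite_support hp' hC).symm)
  have hAB : A ≤ B := le_inf (Subalgebra.le_topologicalClosure A) (range_leftRegularAlgHom_le hL.1)
  subst hLipB
  refine ⟨fun c S T hS hT => ⟨B.smul_mem hS c, B.add_mem hS hT, B.mul_mem hS hT⟩, ?_,
    fun a ha T hT => hAB (mem_range_leftRegularAlgHom ha hT)⟩
  rw [Frp_eq_topologicalClosure_range]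
  exact closure_mono hAB

theorem stmt4 (p : ℝ≥0∞) [Fact (1 ≤ p)] (hp' : p ≠ ∞)
    {G : Type*} [Group G] [Countable G]
    (L : G → ℝ) (hL : IsProperLengthFunction L)
    (Lip : Set (lp (fun _ : G => ℂ) p →L[ℂ] lp (fun _ : G => ℂ) p))
    (hLip : Lip = {T | T ∈ Frp p G ∧ ∃ C : ℝ, 0 ≤ C ∧
      ∀ ξ : lp (fun _ : G => ℂ) p, (Function.support ⇑ξ).Finite →
        ∀ hLξ : Memℓp (fun g => (L g : ℂ) * ξ g) p,
          ∃ hc : Memℓp (fun g => (L g : ℂ) * (T ξ) g - (T ⟨_, hLξ⟩) g) p,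
            ‖(⟨_, hc⟩ : lp (fun _ : G => ℂ) p)‖ ≤ C * ‖ξ‖}) :
    (∀ (cc : ℂ) (S T : lp (fun _ : G => ℂ) p →L[ℂ] lp (fun _ : G => ℂ) p),
      S ∈ Lip → T ∈ Lip → cc • S ∈ Lip ∧ S + T ∈ Lip ∧ S * T ∈ Lip) ∧
    Frp p G ⊆ closure Lip ∧
    (∀ a : G → ℂ, (Function.support a).Finite →
      ∀ T : lp (fun _ : G => ℂ) p →L[ℂ] lp (fun _ : G => ℂ) p,
        (∀ ξ : lp (fun _ : G => ℂ) p, ⇑(T ξ) = conv a ⇑ξ) → T ∈ Lip) :=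
  stmt4_general p hp' L hL Lip hLip
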